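/- arXiv:2005.13898 — 4 statements merged into one kernel-verified Lean document; each statement's English description precedes it below -/
import Mathlib

section
/- For every integer n > K, the expected conditional CRI length satisfies the closed-form expression L_n = 1 - C(n,K) · ∑_{j=1}^{n-K} [2 · j · (-1)^j · C(n-K, j)] / [(j+K) · (1 - p^{j+K} - (1-p)^{j+K})]. -/
open Finset

/-!
If `X ~ Bin(i, p)`, then `E[C(X, m) + C(i - X, m)] = C(i, m) (pᵐ + (1 - p)ᵐ)`, so the
recursion acts diagonally on the basis `j ↦ C(j, m)`. Hence `1 + ∑_{m > K} cₘ C(j, m)` solves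
it exactly when `∑ₘ cₘ (1 - pᵐ - (1 - p)ᵐ) C(i, m) = 2` for all `i > K`, and binomial
inversion gives `cₘ (1 - pᵐ - (1 - p)ᵐ) = 2 (-1)^(m-K-1) C(m-1, K)`; only `m ≤ n` matters
for `L n`. The solution is unique because `L i` enters its own equation with coefficient
`pⁱ + (1 - p)ⁱ < 1`.
-/

theorem sum_choose_mul_pow_mul_pow_mul_choose {R : Type*} [CommSemiring R] (a b : R) (n m : ℕ) :
    ∑ i ∈ range (n + 1), (n.choose i : R) * a ^ i * b ^ (n - i) * (i.choose m : R) =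
      n.choose m * a ^ m * (a + b) ^ (n - m) := by
  rcases le_or_gt m n with hmn | hnm
  · obtain ⟨k, rfl⟩ := Nat.exists_eq_add_of_le hmn
    have hlow : ∑ i ∈ range m, ((m + k).choose i : R) * a ^ i * b ^ (m + k - i) *
        (i.choose m : R) = 0 :=
      sum_eq_zero fun i hi => by simp [Nat.choose_eq_zero_of_lt (mem_range.1 hi)]
    rw [show m + k + 1 = m + (k + 1) by ring, sum_range_add, hlow, zero_add,
      Nat.add_sub_cancel_left, add_pow, mul_sum]
    refine sum_congr rfl fun t _ => ?_
    have hchoose : ((m + k).choose (m + t) : R) * (m + t).choose m =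
        (m + k).choose m * k.choose t := by
      have h := Nat.choose_mul (n := m + k) (Nat.le_add_right m t)
      simp only [Nat.add_sub_cancel_left] at h
      rw [← Nat.cast_mul, ← Nat.cast_mul, h]
    rw [show m + k - (m + t) = k - t by omega, pow_add]
    calc _ = ((m + k).choose (m + t) * (m + t).choose m : R) * (a ^ m * a ^ t * b ^ (k - t)) := by
          ring
      _ = _ := by rw [hchoose]; ring
  · rw [Nat.choose_eq_zero_of_lt hnm, Nat.cast_zero, zero_mul, zero_mul]
    exact sum_eq_zero fun i hi => by
      simp [Nat.choose_eq_zero_of_lt (lt_of_lt_of_le (mem_range.1 hi) hnm)]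

theorem sum_range_neg_one_pow_mul_choose {a N : ℕ} (haN : a < N) :
    ∑ t ∈ range N, (-1 : ℤ) ^ t * a.choose t = if a = 0 then 1 else 0 := by
  obtain ⟨b, rfl⟩ := Nat.exists_eq_add_of_le (Nat.succ_le_of_lt haN)
  rw [sum_range_add, Int.alternating_sum_range_choose, add_eq_left]
  exact sum_eq_zero fun t _ => by rw [Nat.choose_eq_zero_of_lt (by omega), Nat.cast_zero, mul_zero]

theorem sum_range_neg_one_pow_mul_choose_mul_choose {K N i : ℕ} (hi : i < K + N) :
    ∑ t ∈ range N, (-1 : ℤ) ^ t * (K + t).choose K * i.choose (K + t) =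
      if i = K then 1 else 0 := by
  rcases lt_or_ge i K with hiK | hKi
  · rw [if_neg hiK.ne]
    exact sum_eq_zero fun t _ => by
      rw [Nat.choose_eq_zero_of_lt (show i < K + t by omega), Nat.cast_zero, mul_zero]
  obtain ⟨a, rfl⟩ := Nat.exists_eq_add_of_le hKi
  have hterm : ∀ t, (-1 : ℤ) ^ t * (K + t).choose K * (K + a).choose (K + t) =
      (K + a).choose K * ((-1) ^ t * a.choose t) := fun t => by
    have h := Nat.choose_mul (n := K + a) (Nat.le_add_right K t)
    simp only [Nat.add_sub_cancel_left] at h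
    rw [mul_assoc, ← Nat.cast_mul, mul_comm ((K + t).choose K), h]
    push_cast
    ring
  simp only [hterm, ← mul_sum, sum_range_neg_one_pow_mul_choose (show a < N by omega)]
  split_ifs <;> simp_all

theorem sum_range_neg_one_pow_mul_choose_mul_choose_succ {K N i : ℕ} (hi : i ≤ K + N) :
    ∑ t ∈ range N, (-1 : ℤ) ^ t * (K + t).choose K * i.choose (K + t + 1) =
      if K < i then 1 else 0 := by
  induction i with
  | zero => simp
  | succ i ih =>
    simp only [Nat.choose_succ_succ', Nat.cast_add, mul_add, sum_add_distrib,
      sum_range_neg_one_pow_mul_choose_mul_choose (show i < K + N by omega), ih (by omega)]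
    split_ifs <;> omega

def binomialMean (p : ℝ) (n : ℕ) (f : ℕ → ℝ) : ℝ :=
  ∑ i ∈ range (n + 1), (n.choose i : ℝ) * p ^ i * (1 - p) ^ (n - i) * f i

namespace binomialMean

variable (p : ℝ) (n : ℕ)

theorem add (f g : ℕ → ℝ) :
    binomialMean p n (fun i => f i + g i) = binomialMean p n f + binomialMean p n g := by
  simp only [binomialMean, mul_add, sum_add_distrib]

theorem sub (f g : ℕ → ℝ) :
    binomialMean p n (fun i => f i - g i) = binomialMean p n f - binomialMean p n g := by
  simp only [binomialMean, mul_sub, sum_sub_distrib]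

theorem const_mul (c : ℝ) (f : ℕ → ℝ) :
    binomialMean p n (fun i => c * f i) = c * binomialMean p n f := by
  simp only [binomialMean, mul_sum]
  exact sum_congr rfl fun _ _ => by ring

theorem sum {ι : Type*} (s : Finset ι) (f : ι → ℕ → ℝ) :
    binomialMean p n (fun i => ∑ t ∈ s, f t i) = ∑ t ∈ s, binomialMean p n (f t) := by
  simp only [binomialMean, mul_sum]
  exact sum_comm

theorem choose (m : ℕ) :
    binomialMean p n (fun i => (i.choose m : ℝ)) = n.choose m * p ^ m := by
  simp [binomialMean, sum_choose_mul_pow_mul_pow_mul_choose]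

theorem const (c : ℝ) : binomialMean p n (fun _ => c) = c := by
  have h := const_mul p n c (fun i => (i.choose 0 : ℝ))
  rw [choose] at h
  simpa using h

theorem comp_sub (f : ℕ → ℝ) :
    binomialMean p n (fun i => f (n - i)) = binomialMean (1 - p) n f := by
  unfold binomialMean
  rw [← sum_range_reflect]
  refine sum_congr rfl fun i hi => ?_
  have hi : i ≤ n := Nat.lt_succ_iff.1 (mem_range.1 hi)
  simp only [Nat.add_sub_cancel, Nat.choose_symm hi, Nat.sub_sub_self hi, sub_sub_cancel]
  ring

theorem choose_sub (m : ℕ) :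
    binomialMean p n (fun i => ((n - i).choose m : ℝ)) = n.choose m * (1 - p) ^ m := by
  rw [comp_sub p n (fun i => (i.choose m : ℝ)), choose]

theorem eq_of_forall_mem_Ioo_eq_zero (hn : n ≠ 0) {f : ℕ → ℝ} (hf : ∀ i ∈ Set.Ioo 0 n, f i = 0) :
    binomialMean p n f = (1 - p) ^ n * f 0 + p ^ n * f n := by
  obtain ⟨n, rfl⟩ := Nat.exists_eq_succ_of_ne_zero hn
  have hmid : ∑ i ∈ range n, ((n + 1).choose (i + 1) : ℝ) * p ^ (i + 1) *
      (1 - p) ^ (n + 1 - (i + 1)) * f (i + 1) = 0 :=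
    sum_eq_zero fun i hi => by rw [hf (i + 1) ⟨i.succ_pos, by simpa using hi⟩, mul_zero]
  rw [binomialMean, sum_range_succ, sum_range_succ', hmid]
  simp

end binomialMean

theorem pow_add_one_sub_pow_lt_one {p : ℝ} (hp0 : 0 < p) (hp1 : p < 1) {m : ℕ} (hm : 2 ≤ m) :
    p ^ m + (1 - p) ^ m < 1 := by
  have hq0 : 0 < 1 - p := sub_pos.2 hp1
  have hpm : p ^ m ≤ p ^ 2 := pow_le_pow_of_le_one hp0.le hp1.le hm
  have hqm : (1 - p) ^ m ≤ (1 - p) ^ 2 := pow_le_pow_of_le_one hq0.le (by linarith) hm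
  nlinarith [mul_pos hp0 hq0]

theorem eq_of_cri_recursion {K : ℕ} (hK : 1 ≤ K) {p : ℝ} (hp0 : 0 < p) (hp1 : p < 1)
    {L M : ℕ → ℝ} {n : ℕ} (hbase : ∀ i ≤ K, L i = M i)
    (hL : ∀ i, K < i → i ≤ n → L i = 1 + binomialMean p i (fun j => L j + L (i - j)))
    (hM : ∀ i, K < i → i ≤ n → M i = 1 + binomialMean p i (fun j => M j + M (i - j))) :
    ∀ i ≤ n, L i = M i := by
  intro i
  induction i using Nat.strong_induction_on with
  | _ i ih =>
    intro hin
    rcases le_or_gt i K with hiK | hKi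
    · exact hbase i hiK
    set D : ℕ → ℝ := fun j => L j - M j
    have hD0 : D 0 = 0 := sub_eq_zero.2 (hbase 0 K.zero_le)
    have hDi : D i = (p ^ i + (1 - p) ^ i) * D i := by
      have hmid : ∀ j ∈ Set.Ioo 0 i, D j + D (i - j) = 0 := fun j ⟨hj0, hji⟩ => by
        simp only [D, ih j hji (by omega), ih (i - j) (by omega) (by omega), sub_self, add_zero]
      calc D i = binomialMean p i (fun j => D j + D (i - j)) := by
            show L i - M i = _
            rw [hL i hKi hin, hM i hKi hin, add_sub_add_left_eq_sub, ← binomialMean.sub]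
            congr 1
            funext j
            ring
        _ = (p ^ i + (1 - p) ^ i) * D i := by
            rw [binomialMean.eq_of_forall_mem_Ioo_eq_zero p i (by omega) hmid]
            simp only [Nat.sub_zero, Nat.sub_self, hD0]
            ring
    have hlt := pow_add_one_sub_pow_lt_one hp0 hp1 (show 2 ≤ i by omega)
    have : (1 - (p ^ i + (1 - p) ^ i)) * D i = 0 := by linarith
    exact sub_eq_zero.1 ((mul_eq_zero.1 this).resolve_left (by linarith))

noncomputable def criCoeff (K : ℕ) (p : ℝ) (t : ℕ) : ℝ :=
  2 * (-1) ^ t * (K + t).choose K / (1 - p ^ (K + t + 1) - (1 - p) ^ (K + t + 1))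

noncomputable def criAnsatz (K N : ℕ) (p : ℝ) (i : ℕ) : ℝ :=
  1 + ∑ t ∈ range N, criCoeff K p t * i.choose (K + t + 1)

theorem criAnsatz_of_le {K N i : ℕ} (p : ℝ) (hi : i ≤ K) : criAnsatz K N p i = 1 := by
  rw [criAnsatz, add_eq_left]
  exact sum_eq_zero fun t _ => by
    rw [Nat.choose_eq_zero_of_lt (by omega), Nat.cast_zero, mul_zero]

theorem binomialMean_criAnsatz (K N : ℕ) (p : ℝ) (i : ℕ) :
    binomialMean p i (fun j => criAnsatz K N p j + criAnsatz K N p (i - j)) =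
      2 + ∑ t ∈ range N, criCoeff K p t * i.choose (K + t + 1) *
        (p ^ (K + t + 1) + (1 - p) ^ (K + t + 1)) := by
  have hsplit : (fun j => criAnsatz K N p j + criAnsatz K N p (i - j)) = fun j =>
      2 + ∑ t ∈ range N, criCoeff K p t *
        ((j.choose (K + t + 1) : ℝ) + ((i - j).choose (K + t + 1) : ℝ)) := by
    funext j
    simp only [criAnsatz, mul_add, sum_add_distrib]
    ring
  rw [hsplit, binomialMean.add, binomialMean.const, binomialMean.sum]
  congr 1
  refine sum_congr rfl fun t _ => ?_
  rw [binomialMean.const_mul, binomialMean.add, binomialMean.choose, binomialMean.choose_sub]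
  ring

theorem criAnsatz_recursion {K N : ℕ} (hK : 1 ≤ K) {p : ℝ} (hp0 : 0 < p) (hp1 : p < 1) {i : ℕ}
    (hKi : K < i) (hiN : i ≤ K + N) :
    criAnsatz K N p i =
      1 + binomialMean p i (fun j => criAnsatz K N p j + criAnsatz K N p (i - j)) := by
  have hcoeff : ∀ t, criCoeff K p t * (1 - p ^ (K + t + 1) - (1 - p) ^ (K + t + 1)) =
      2 * ((-1) ^ t * (K + t).choose K) := fun t => by
    have hpos := pow_add_one_sub_pow_lt_one hp0 hp1 (show 2 ≤ K + t + 1 by omega)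
    rw [criCoeff, div_mul_cancel₀ _ (by linarith)]
    ring
  have hsum : ∑ t ∈ range N, ((-1) ^ t * (K + t).choose K * i.choose (K + t + 1) : ℝ) = 1 := by
    exact_mod_cast (sum_range_neg_one_pow_mul_choose_mul_choose_succ hiN).trans (if_pos hKi)
  have hgap : ∑ t ∈ range N, criCoeff K p t * i.choose (K + t + 1) *
      (1 - p ^ (K + t + 1) - (1 - p) ^ (K + t + 1)) = 2 := by
    calc _ = ∑ t ∈ range N, 2 * ((-1) ^ t * (K + t).choose K * i.choose (K + t + 1) : ℝ) :=
          sum_congr rfl fun t _ => by rw [mul_right_comm, hcoeff]; ring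
      _ = 2 := by rw [← mul_sum, hsum, mul_one]
  simp only [mul_sub, mul_one, sum_sub_distrib] at hgap
  rw [binomialMean_criAnsatz, criAnsatz]
  simp only [mul_add, sum_add_distrib]
  linarith

theorem succ_add_mul_choose_mul_choose (K n t : ℕ) :
    (K + t + 1) * (K + t).choose K * n.choose (K + t + 1) =
      (t + 1) * n.choose K * (n - K).choose (t + 1) := by
  have hpascal := Nat.choose_mul_succ_eq (K + t) K
  have hsub := Nat.choose_mul (n := n) (show K ≤ K + t + 1 by omega)
  rw [show K + t + 1 - K = t + 1 by omega] at hpascal hsub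
  calc _ = n.choose (K + t + 1) * ((K + t).choose K * (K + t + 1)) := by ring
    _ = (t + 1) * (n.choose (K + t + 1) * (K + t + 1).choose K) := by rw [hpascal]; ring
    _ = _ := by rw [hsub]; ring

theorem criCoeff_mul_choose (K n t : ℕ) (p : ℝ) :
    criCoeff K p t * n.choose (K + t + 1) = -(n.choose K *
      (2 * ((t + 1 : ℕ) : ℝ) * (-1) ^ (t + 1) * ((n - K).choose (t + 1) : ℝ) /
        ((((t + 1 : ℕ) : ℝ) + K) * (1 - p ^ (t + 1 + K) - (1 - p) ^ (t + 1 + K))))) := by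
  have hnat : ((K + t).choose K * n.choose (K + t + 1) : ℝ) =
      (t + 1) * n.choose K * (n - K).choose (t + 1) / (K + t + 1) := by
    have h : ((K + t + 1) * (K + t).choose K * n.choose (K + t + 1) : ℝ) =
        (t + 1) * n.choose K * (n - K).choose (t + 1) := by
      exact_mod_cast succ_add_mul_choose_mul_choose K n t
    rw [eq_div_iff (by positivity)]
    linear_combination h
  rw [criCoeff, show t + 1 + K = K + t + 1 by ring]
  push_cast
  calc _ = 2 * (-1) ^ t * ((K + t).choose K * n.choose (K + t + 1) : ℝ) /
        (1 - p ^ (K + t + 1) - (1 - p) ^ (K + t + 1)) := by ring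
    _ = _ := by rw [hnat, div_mul_eq_div_div]; ring

theorem bta_cri_closed_form_general
    (K : ℕ) (hK : 1 ≤ K) (p : ℝ) (hp0 : 0 < p) (hp1 : p < 1)
    (L : ℕ → ℝ)
    (hL1 : ∀ n, n ≤ K → L n = 1)
    (hL2 : ∀ n, K < n → L n = 1 + ∑ i ∈ Finset.range (n + 1),
        (n.choose i : ℝ) * p ^ i * (1 - p) ^ (n - i) * (L i + L (n - i)))
    (n : ℕ) :
    L n = 1 - (n.choose K : ℝ) * ∑ j ∈ Finset.Icc 1 (n - K),
        (2 * (j : ℝ) * (-1 : ℝ) ^ j * ((n - K).choose j : ℝ)) /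
          (((j : ℝ) + (K : ℝ)) * (1 - p ^ (j + K) - (1 - p) ^ (j + K))) := by
  have hLM : ∀ i ≤ n, L i = criAnsatz K (n - K) p i :=
    eq_of_cri_recursion hK hp0 hp1 (fun i hi => (hL1 i hi).trans (criAnsatz_of_le p hi).symm)
      (fun i hKi _ => hL2 i hKi) (fun i hKi hin => criAnsatz_recursion hK hp0 hp1 hKi (by omega))
  rw [hLM n le_rfl, criAnsatz, ← Ico_add_one_right_eq_Icc, sum_Ico_eq_sum_range,
    Nat.add_sub_cancel, sub_eq_add_neg, mul_sum, ← sum_neg_distrib]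
  refine congrArg _ (sum_congr rfl fun t _ => ?_)
  rw [add_comm 1 t, criCoeff_mul_choose]

theorem bta_cri_closed_form
    (K : ℕ) (hK : 1 ≤ K) (p : ℝ) (hp0 : 0 < p) (hp1 : p < 1)
    (L : ℕ → ℝ)
    (hL1 : ∀ n, n ≤ K → L n = 1)
    (hL2 : ∀ n, K < n → L n = 1 + ∑ i ∈ Finset.range (n + 1),
        (n.choose i : ℝ) * p ^ i * (1 - p) ^ (n - i) * (L i + L (n - i)))
    (n : ℕ) (hn : K < n) :
    L n = 1 - (n.choose K : ℝ) * ∑ j ∈ Finset.Icc 1 (n - K),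
        (2 * (j : ℝ) * (-1 : ℝ) ^ j * ((n - K).choose j : ℝ)) /
          (((j : ℝ) + (K : ℝ)) * (1 - p ^ (j + K) - (1 - p) ^ (j + K))) :=
  bta_cri_closed_form_general K hK p hp0 hp1 L hL1 hL2 n
end

section
/- Define the coefficient sequence a : ℕ → ℝ by a_j = ∑_{i=0}^{j} (-1)^{j-i} · L_i / (i! · (j-i)!). Then for every integer n > K, the coefficients satisfy a_n · (1 - p^n - (1-p)^n) = 2 · ∑_{k=0}^{K} (-1)^{n-k+1} / (k! · (n-k)!). -/
/-!
Write `Δⁿ` for the `n`-th forward difference at `0`, so that `n! a_n = Δⁿ L`. With the binomial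
averaging operator `B_x f i = ∑ⱼ C(i,j) xʲ (1-x)^(i-j) f j`, the recurrence and the initial
values combine into the single identity `L + 2·1_{≤K} = 1 + B_p L + B_{1-p} L`, valid for every
`i`. Pascal's rule gives `Δ (B_x f) = x · B_x (Δ f)`, and `B_x g 0 = g 0`, so applying `Δⁿ` yields
`Δⁿ L + 2 Δⁿ 1_{≤K} = (pⁿ + (1-p)ⁿ) Δⁿ L`. Here `Δⁿ 1_{≤K}` is an alternating binomial sum.
-/

open Finset fwdDiff

section

variable {R : Type*} [CommRing R]

theorem fwdDiff_iter_apply_zero (f : ℕ → R) (n : ℕ) :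
    Δ_[1] ^[n] f 0 = ∑ k ∈ range (n + 1), (-1) ^ (n - k) * n.choose k * f k := by
  simp [fwdDiff_iter_eq_sum_shift, zsmul_eq_mul]

theorem fwdDiff_iter_const_of_ne_zero (c : R) {n : ℕ} (hn : n ≠ 0) :
    Δ_[1] ^[n] (fun _ : ℕ ↦ c) = 0 := by
  obtain ⟨m, rfl⟩ := Nat.exists_eq_succ_of_ne_zero hn
  rw [Function.iterate_succ_apply, fwdDiff_const]
  exact Function.iterate_fixed (fwdDiff_const (h := 1) (0 : R)) m

theorem fwdDiff_iter_indicator_le_apply_zero {K n : ℕ} (h : K ≤ n) :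
    Δ_[1] ^[n] (fun i ↦ if i ≤ K then (1 : R) else 0) 0 =
      ∑ k ∈ range (K + 1), (-1 : R) ^ (n - k) * n.choose k := by
  rw [fwdDiff_iter_apply_zero]
  simp only [mul_ite, mul_one, mul_zero, ← sum_filter]
  congr 1
  ext k
  simp only [mem_filter, mem_range]
  omega

/-- The expectation of `f` at a binomial `(i, x)` variable, such as the number of the `i` colliding
packets that a split sends to one side. -/
def bernsteinOp (x : R) (f : ℕ → R) (i : ℕ) : R :=
  ∑ j ∈ range (i + 1), i.choose j * x ^ j * (1 - x) ^ (i - j) * f j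

@[simp]
theorem bernsteinOp_apply_zero (x : R) (f : ℕ → R) : bernsteinOp x f 0 = f 0 := by
  simp [bernsteinOp]

theorem bernsteinOp_congr (x : R) {f g : ℕ → R} {i : ℕ} (h : ∀ j ≤ i, f j = g j) :
    bernsteinOp x f i = bernsteinOp x g i :=
  sum_congr rfl fun j hj ↦ by rw [h j (Nat.le_of_lt_succ (mem_range.mp hj))]

theorem bernsteinOp_const (x c : R) (i : ℕ) : bernsteinOp x (fun _ ↦ c) i = c := by
  calc bernsteinOp x (fun _ ↦ c) i = (x + (1 - x)) ^ i * c := by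
        rw [add_pow, sum_mul, bernsteinOp]
        exact sum_congr rfl fun _ _ ↦ by ring
    _ = c := by rw [add_sub_cancel, one_pow, one_mul]

theorem bernsteinOp_one_sub (x : R) (f : ℕ → R) (i : ℕ) :
    bernsteinOp (1 - x) f i =
      ∑ j ∈ range (i + 1), i.choose j * x ^ j * (1 - x) ^ (i - j) * f (i - j) := by
  rw [bernsteinOp, ← sum_range_reflect]
  refine sum_congr rfl fun j hj ↦ ?_
  have hji : j ≤ i := Nat.le_of_lt_succ (mem_range.mp hj)
  rw [add_tsub_cancel_right, Nat.choose_symm hji, sub_sub_cancel, Nat.sub_sub_self hji]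
  ring

theorem bernsteinOp_sub (x : R) (f g : ℕ → R) :
    bernsteinOp x (f - g) = bernsteinOp x f - bernsteinOp x g := by
  ext i
  simp only [bernsteinOp, Pi.sub_apply, ← sum_sub_distrib, mul_sub]

theorem bernsteinOp_apply_succ (x : R) (f : ℕ → R) (i : ℕ) :
    bernsteinOp x f (i + 1) =
      (1 - x) * bernsteinOp x f i + x * bernsteinOp x (fun j ↦ f (j + 1)) i := by
  simp only [bernsteinOp, mul_assoc]
  rw [sum_choose_succ_mul (fun j k ↦ x ^ j * ((1 - x) ^ k * f j)), mul_sum, mul_sum]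
  congr 1 <;> refine sum_congr rfl fun j hj ↦ ?_
  · rw [Nat.sub_add_comm (Nat.le_of_lt_succ (mem_range.mp hj)), pow_succ]
    ring
  · ring

theorem fwdDiff_bernsteinOp (x : R) (f : ℕ → R) :
    Δ_[1] (bernsteinOp x f) = x • bernsteinOp x (Δ_[1] f) := by
  ext i
  have hΔ : Δ_[1] f = (fun j ↦ f (j + 1)) - f := rfl
  rw [fwdDiff, bernsteinOp_apply_succ, hΔ, bernsteinOp_sub]
  simp only [Pi.smul_apply, Pi.sub_apply, smul_eq_mul]
  ring

theorem fwdDiff_iter_bernsteinOp (x : R) (f : ℕ → R) (n : ℕ) :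
    Δ_[1] ^[n] (bernsteinOp x f) = x ^ n • bernsteinOp x (Δ_[1] ^[n] f) := by
  induction n generalizing f with
  | zero => simp
  | succ n ih =>
    rw [Function.iterate_succ_apply, fwdDiff_bernsteinOp, fwdDiff_iter_const_smul, ih,
      smul_smul, ← pow_succ', ← Function.iterate_succ_apply]

theorem fwdDiff_iter_bernsteinOp_apply_zero (x : R) (f : ℕ → R) (n : ℕ) :
    Δ_[1] ^[n] (bernsteinOp x f) 0 = x ^ n * Δ_[1] ^[n] f 0 := by
  rw [fwdDiff_iter_bernsteinOp, Pi.smul_apply, bernsteinOp_apply_zero, smul_eq_mul]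

end

theorem cast_choose_div_factorial (K : Type*) [Field K] [CharZero K] {n k : ℕ} (h : k ≤ n) :
    (n.choose k : K) / n.factorial = ((k.factorial : K) * (n - k).factorial)⁻¹ := by
  rw [Nat.cast_choose K h, div_div_cancel_left' (by exact_mod_cast n.factorial_ne_zero)]

section

variable {K : ℕ} {p : ℝ} {L : ℕ → ℝ}

theorem cri_add_indicator_eq (hL1 : ∀ n, n ≤ K → L n = 1)
    (hL2 : ∀ n, K < n → L n = 1 + ∑ i ∈ range (n + 1),
        (n.choose i : ℝ) * p ^ i * (1 - p) ^ (n - i) * (L i + L (n - i)))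
    (i : ℕ) :
    L i + 2 * (if i ≤ K then 1 else 0) = 1 + bernsteinOp p L i + bernsteinOp (1 - p) L i := by
  split_ifs with hi
  · have hL : ∀ j ≤ i, L j = 1 := fun j hj ↦ hL1 j (hj.trans hi)
    rw [bernsteinOp_congr p hL, bernsteinOp_congr (1 - p) hL, bernsteinOp_const,
      bernsteinOp_const, hL i le_rfl]
    ring
  · rw [hL2 i (not_le.mp hi), bernsteinOp_one_sub, bernsteinOp, mul_zero, add_zero, add_assoc,
      ← sum_add_distrib]
    simp only [mul_add]

end

theorem bta_cri_coefficient_formula_general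
    (K : ℕ) (p : ℝ)
    (L : ℕ → ℝ)
    (hL1 : ∀ n, n ≤ K → L n = 1)
    (hL2 : ∀ n, K < n → L n = 1 + ∑ i ∈ Finset.range (n + 1),
        (n.choose i : ℝ) * p ^ i * (1 - p) ^ (n - i) * (L i + L (n - i)))
    (a : ℕ → ℝ)
    (ha : ∀ j, a j = ∑ i ∈ Finset.range (j + 1),
        (-1 : ℝ) ^ (j - i) * L i / ((i.factorial : ℝ) * ((j - i).factorial : ℝ)))
    (n : ℕ) (hn : K < n) :
    a n * (1 - p ^ n - (1 - p) ^ n) =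
      2 * ∑ k ∈ Finset.range (K + 1),
        (-1 : ℝ) ^ (n - k + 1) / ((k.factorial : ℝ) * ((n - k).factorial : ℝ)) := by
  have hfac : (n.factorial : ℝ) ≠ 0 := by exact_mod_cast n.factorial_ne_zero
  have ha_n : a n = Δ_[1] ^[n] L 0 / n.factorial := by
    rw [ha, fwdDiff_iter_apply_zero, sum_div]
    refine sum_congr rfl fun i hi ↦ ?_
    rw [div_eq_mul_inv _ ((i.factorial : ℝ) * _),
      ← cast_choose_div_factorial ℝ (Nat.le_of_lt_succ (mem_range.mp hi))]
    ring
  have hrhs : 2 * ∑ k ∈ range (K + 1),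
      (-1 : ℝ) ^ (n - k + 1) / ((k.factorial : ℝ) * ((n - k).factorial : ℝ)) =
      -2 * Δ_[1] ^[n] (fun i ↦ if i ≤ K then (1 : ℝ) else 0) 0 / n.factorial := by
    rw [fwdDiff_iter_indicator_le_apply_zero hn.le, mul_div_assoc, sum_div, mul_sum, mul_sum]
    refine sum_congr rfl fun k hk ↦ ?_
    rw [mul_div_assoc, cast_choose_div_factorial ℝ
      ((Nat.le_of_lt_succ (mem_range.mp hk)).trans hn.le), pow_succ]
    ring
  have hrec : L + (2 : ℝ) • (fun i ↦ if i ≤ K then 1 else 0) =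
      (fun _ ↦ 1) + bernsteinOp p L + bernsteinOp (1 - p) L :=
    funext (cri_add_indicator_eq hL1 hL2)
  have hΔ := congrFun (congrArg (Δ_[1] ^[n]) hrec) 0
  simp only [fwdDiff_iter_add, fwdDiff_iter_const_smul, fwdDiff_iter_const_of_ne_zero _
    (by omega : n ≠ 0), Pi.add_apply, Pi.smul_apply, smul_eq_mul, zero_add,
    fwdDiff_iter_bernsteinOp_apply_zero] at hΔ
  rw [ha_n, hrhs]
  field_simp
  linear_combination hΔ

theorem bta_cri_coefficient_formula
    (K : ℕ) (hK : 1 ≤ K) (p : ℝ) (hp0 : 0 < p) (hp1 : p < 1)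
    (L : ℕ → ℝ)
    (hL1 : ∀ n, n ≤ K → L n = 1)
    (hL2 : ∀ n, K < n → L n = 1 + ∑ i ∈ Finset.range (n + 1),
        (n.choose i : ℝ) * p ^ i * (1 - p) ^ (n - i) * (L i + L (n - i)))
    (a : ℕ → ℝ)
    (ha : ∀ j, a j = ∑ i ∈ Finset.range (j + 1),
        (-1 : ℝ) ^ (j - i) * L i / ((i.factorial : ℝ) * ((j - i).factorial : ℝ)))
    (n : ℕ) (hn : K < n) :
    a n * (1 - p ^ n - (1 - p) ^ n) =
      2 * ∑ k ∈ Finset.range (K + 1),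
        (-1 : ℝ) ^ (n - k + 1) / ((k.factorial : ℝ) * ((n - k).factorial : ℝ)) :=
  bta_cri_coefficient_formula_general K p L hL1 hL2 a ha n hn
end

section
/- Suppose that for every real x ≥ 0 the series ∑_{n=0}^{∞} L_n · x^n / n! converges, and define Λ(x) = e^{-x} · ∑_{n=0}^{∞} L_n · x^n / n! (the expected CRI length when the number of contending users is Poisson distributed with mean x). Then Λ satisfies the functional equation Λ(x) = 1 + Λ(p·x) + Λ((1-p)·x) - 2 · e^{-x} · ∑_{k=0}^{K} x^k / k! for every x ≥ 0. -/
/-!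
Let `F(x) = ∑ L_n x^n / n!`. Multiplying the recurrence by `x^n / n!`, the binomial sum becomes
the `n`-th coefficient of the Cauchy products `F(px) e^{(1-p)x} + e^{px} F((1-p)x)`. For `n ≤ K`
the recurrence is replaced by `L_n = 1`, while the right-hand side equals `3` there (the binomial
probabilities sum to one); summing the discrepancy gives `2 ∑_{k ≤ K} x^k / k!`. Multiplying by
`e^{-x}` yields the functional equation. The Cauchy products need absolute convergence, which
follows from convergence on all of `[0, ∞)` by comparison with a geometric series.
-/

open Finset Nat

lemma summable_norm_mul_pow_of_summable_mul_pow {c : ℕ → ℝ} {y z : ℝ}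
    (h : Summable fun n => c n * y ^ n) (hzy : |z| < |y|) :
    Summable fun n => ‖c n * z ^ n‖ := by
  have hy : 0 < |y| := (abs_nonneg z).trans_lt hzy
  obtain ⟨C, hC⟩ := h.tendsto_atTop_zero.norm.bddAbove_range
  have hr : |z| / |y| < 1 := (div_lt_one hy).2 hzy
  refine .of_nonneg_of_le (fun n => norm_nonneg _) (fun n => ?_)
    ((summable_geometric_of_lt_one (by positivity) hr).mul_left C)
  calc ‖c n * z ^ n‖ = ‖c n * y ^ n‖ * (|z| / |y|) ^ n := by
        simp only [div_pow, norm_mul, norm_pow, Real.norm_eq_abs]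
        field_simp
    _ ≤ C * (|z| / |y|) ^ n := by
        gcongr
        exact hC ⟨n, rfl⟩

noncomputable def egf (a : ℕ → ℝ) (x : ℝ) : ℝ := ∑' n, a n * x ^ n / n !

lemma summable_norm_egf_of_forall_summable {a : ℕ → ℝ}
    (ha : ∀ y : ℝ, 0 ≤ y → Summable fun n => a n * y ^ n / n !) (z : ℝ) :
    Summable fun n => ‖a n * z ^ n / (n ! : ℝ)‖ := by
  have h := ha (|z| + 1) (by positivity)
  simp only [mul_div_right_comm (a _)] at h ⊢
  refine summable_norm_mul_pow_of_summable_mul_pow h ?_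
  rw [abs_of_pos (by positivity : (0 : ℝ) < |z| + 1)]
  linarith

lemma egf_one : egf (fun _ => 1) = Real.exp := by
  ext x
  simp [egf, Real.exp_eq_exp_ℝ, NormedSpace.exp_eq_tsum_div]

lemma summable_norm_egf_one (z : ℝ) : Summable fun n => ‖(1 : ℝ) * z ^ n / (n ! : ℝ)‖ :=
  summable_norm_egf_of_forall_summable
    (fun y _ => by simpa using Real.summable_pow_div_factorial y) z

lemma hasSum_egf_mul_egf {a b : ℕ → ℝ} {x y : ℝ}
    (ha : Summable fun n => ‖a n * x ^ n / (n ! : ℝ)‖)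
    (hb : Summable fun n => ‖b n * y ^ n / (n ! : ℝ)‖) :
    HasSum (fun n => (∑ k ∈ range (n + 1),
        n.choose k * (a k * x ^ k) * (b (n - k) * y ^ (n - k))) / n !) (egf a x * egf b y) := by
  have hterm : (fun n => (∑ k ∈ range (n + 1),
        n.choose k * (a k * x ^ k) * (b (n - k) * y ^ (n - k))) / (n ! : ℝ)) =
      fun n => ∑ k ∈ range (n + 1),
        a k * x ^ k / k ! * (b (n - k) * y ^ (n - k) / (n - k)!) := by
    funext n
    rw [sum_div]
    refine sum_congr rfl fun k hk => ?_
    have hkn : k ≤ n := Nat.lt_succ_iff.1 (mem_range.1 hk)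
    have hchoose : (n.choose k : ℝ) ≠ 0 := by exact_mod_cast (Nat.choose_pos hkn).ne'
    rw [← Nat.choose_mul_factorial_mul_factorial hkn]
    push_cast
    field_simp
  rw [hterm]
  exact (hasSum_sum_range_mul_of_summable_norm ha hb :)

lemma hasSum_egf_binomial_split {a : ℕ → ℝ}
    (ha : ∀ z, Summable fun n => ‖a n * z ^ n / (n ! : ℝ)‖) (p q x : ℝ) :
    HasSum (fun n => (∑ i ∈ range (n + 1),
        (n.choose i : ℝ) * p ^ i * q ^ (n - i) * (a i + a (n - i))) * x ^ n / n !)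
      (egf a (p * x) * Real.exp (q * x) + Real.exp (p * x) * egf a (q * x)) := by
  rw [← egf_one]
  convert (hasSum_egf_mul_egf (ha _) (summable_norm_egf_one _)).add
    (hasSum_egf_mul_egf (summable_norm_egf_one _) (ha _)) using 1
  funext n
  rw [← add_div, ← sum_add_distrib, sum_mul]
  congr 1
  refine sum_congr rfl fun k hk => ?_
  rw [← Nat.add_sub_cancel' (Nat.lt_succ_iff.1 (mem_range.1 hk))]
  simp only [pow_add, mul_pow, Nat.add_sub_cancel_left]
  ring

lemma cri_recurrence_add_ite {K : ℕ} {p : ℝ} {L : ℕ → ℝ}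
    (hL1 : ∀ n, n ≤ K → L n = 1)
    (hL2 : ∀ n, K < n → L n = 1 + ∑ i ∈ range (n + 1),
        (n.choose i : ℝ) * p ^ i * (1 - p) ^ (n - i) * (L i + L (n - i))) (n : ℕ) :
    L n + (if n ≤ K then 2 else 0) = 1 + ∑ i ∈ range (n + 1),
        (n.choose i : ℝ) * p ^ i * (1 - p) ^ (n - i) * (L i + L (n - i)) := by
  split_ifs with hn
  · have hbinom : ∑ i ∈ range (n + 1),
        (n.choose i : ℝ) * p ^ i * (1 - p) ^ (n - i) * (L i + L (n - i)) =
          2 * (p + (1 - p)) ^ n := by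
      rw [add_pow, mul_sum]
      refine sum_congr rfl fun i hi => ?_
      have hin : i ≤ n := Nat.lt_succ_iff.1 (mem_range.1 hi)
      rw [hL1 i (by omega), hL1 (n - i) (by omega)]
      ring
    rw [hbinom, hL1 n hn]
    norm_num
  · rw [hL2 n (not_le.1 hn)]
    ring

lemma hasSum_ite_le_mul_pow_div_factorial (K : ℕ) (x : ℝ) :
    HasSum (fun n => (if n ≤ K then 2 else 0) * x ^ n / n !)
      (2 * ∑ k ∈ range (K + 1), x ^ k / k !) := by
  have h : HasSum (fun n => (if n ≤ K then (2 : ℝ) else 0) * x ^ n / n !)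
      (∑ k ∈ range (K + 1), (if k ≤ K then (2 : ℝ) else 0) * x ^ k / k !) :=
    hasSum_sum_of_ne_finset_zero fun n hn => by
      rw [if_neg (by simpa [Nat.lt_succ_iff] using hn)]; ring
  convert h using 1
  rw [mul_sum]
  exact sum_congr rfl fun k hk => by rw [if_pos (Nat.lt_succ_iff.1 (mem_range.1 hk))]; ring

theorem poisson_cri_functional_equation_general
    (K : ℕ) (p : ℝ)
    (L : ℕ → ℝ)
    (hL1 : ∀ n, n ≤ K → L n = 1)
    (hL2 : ∀ n, K < n → L n = 1 + ∑ i ∈ Finset.range (n + 1),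
        (n.choose i : ℝ) * p ^ i * (1 - p) ^ (n - i) * (L i + L (n - i)))
    (hsum : ∀ x : ℝ, 0 ≤ x → Summable (fun n : ℕ => L n * x ^ n / (n.factorial : ℝ)))
    (Λ : ℝ → ℝ)
    (hΛ : ∀ x : ℝ, Λ x = Real.exp (-x) * ∑' n : ℕ, L n * x ^ n / (n.factorial : ℝ)) :
    ∀ x : ℝ, 0 ≤ x →
      Λ x = 1 + Λ (p * x) + Λ ((1 - p) * x)
            - 2 * Real.exp (-x) * ∑ k ∈ Finset.range (K + 1), x ^ k / (k.factorial : ℝ) := by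
  intro x hx
  have hexp : HasSum (fun n => x ^ n / n !) (Real.exp x) := by
    rw [Real.exp_eq_exp_ℝ]; exact NormedSpace.expSeries_div_hasSum_exp x
  have hseries : egf L x + 2 * ∑ k ∈ range (K + 1), x ^ k / k ! =
      Real.exp x + (egf L (p * x) * Real.exp ((1 - p) * x)
        + Real.exp (p * x) * egf L ((1 - p) * x)) := by
    refine ((hsum x hx).hasSum.add (hasSum_ite_le_mul_pow_div_factorial K x)).unique ?_
    convert hexp.add
      (hasSum_egf_binomial_split (summable_norm_egf_of_forall_summable hsum) p (1 - p) x) using 1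
    funext n
    rw [← add_div, ← add_mul, cri_recurrence_add_ite hL1 hL2 n]
    ring
  have e1 : Real.exp (-x) * Real.exp x = 1 := by rw [← Real.exp_add]; simp
  have e2 : Real.exp (-x) * Real.exp ((1 - p) * x) = Real.exp (-(p * x)) := by
    rw [← Real.exp_add]; ring_nf
  have e3 : Real.exp (-x) * Real.exp (p * x) = Real.exp (-((1 - p) * x)) := by
    rw [← Real.exp_add]; ring_nf
  have hΛ' : ∀ y, Λ y = Real.exp (-y) * egf L y := hΛ
  rw [hΛ' x, hΛ' (p * x), hΛ' ((1 - p) * x)]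
  linear_combination Real.exp (-x) * hseries + e1 + egf L (p * x) * e2 + egf L ((1 - p) * x) * e3

theorem poisson_cri_functional_equation
    (K : ℕ) (hK : 1 ≤ K) (p : ℝ) (hp0 : 0 < p) (hp1 : p < 1)
    (L : ℕ → ℝ)
    (hL1 : ∀ n, n ≤ K → L n = 1)
    (hL2 : ∀ n, K < n → L n = 1 + ∑ i ∈ Finset.range (n + 1),
        (n.choose i : ℝ) * p ^ i * (1 - p) ^ (n - i) * (L i + L (n - i)))
    (hsum : ∀ x : ℝ, 0 ≤ x → Summable (fun n : ℕ => L n * x ^ n / (n.factorial : ℝ)))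
    (Λ : ℝ → ℝ)
    (hΛ : ∀ x : ℝ, Λ x = Real.exp (-x) * ∑' n : ℕ, L n * x ^ n / (n.factorial : ℝ)) :
    ∀ x : ℝ, 0 ≤ x →
      Λ x = 1 + Λ (p * x) + Λ ((1 - p) * x)
            - 2 * Real.exp (-x) * ∑ k ∈ Finset.range (K + 1), x ^ k / (k.factorial : ℝ) :=
  poisson_cri_functional_equation_general K p L hL1 hL2 hsum Λ hΛ
end

section
/- Define f(x, k, z) = x·z - 1 + ∑_{i=0}^{k} (L_i - x·i + 1) · (z^i / i!) · e^{-z}. Let m ≥ K be an integer and let α, β be real numbers such that α·n - 1 ≤ L_n ≤ β·n - 1 for every integer n > m, and suppose that for every real z ≥ 0 the series ∑_{n=0}^{∞} L_n · z^n / n! converges. Then for every real z ≥ 0, the Poisson-averaged expected CRI length Λ(z) = e^{-z} · ∑_{n=0}^{∞} L_n · z^n / n! satisfies f(α, m, z) ≤ Λ(z) ≤ f(β, m, z). -/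
/-!
Write `Λ` as the Poisson transform `e^{-z} ∑ a_n z^n / n!` of `a = L`. Since a Poisson variable
has mean `z`, the affine sequence `x n - 1` transforms to `x z - 1`, so `f(x, m, z)` is the Poisson
transform of the sequence that agrees with `L` up to `m` and equals `x n - 1` beyond. The bounds on
`L` compare these sequences termwise, and the Poisson transform is monotone for `z ≥ 0`.
-/

open Finset Nat Real

noncomputable def poissonTransform (a : ℕ → ℝ) (z : ℝ) : ℝ :=
  exp (-z) * ∑' n, a n * z ^ n / n !

noncomputable def withLinearTail (L : ℕ → ℝ) (m : ℕ) (x : ℝ) (n : ℕ) : ℝ :=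
  if n ≤ m then L n else x * n - 1

theorem hasSum_pow_div_factorial (z : ℝ) : HasSum (fun n : ℕ => z ^ n / n !) (exp z) := by
  simpa [← exp_eq_exp_ℝ] using NormedSpace.expSeries_div_hasSum_exp z

theorem hasSum_natCast_mul_pow_div_factorial (z : ℝ) :
    HasSum (fun n : ℕ => n * z ^ n / n !) (z * exp z) := by
  have hshift : HasSum (fun n : ℕ => ((n + 1 : ℕ) : ℝ) * z ^ (n + 1) / (n + 1)!) (z * exp z) :=
    ((hasSum_pow_div_factorial z).mul_left z).congr_fun fun n => by
      rw [factorial_succ]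
      push_cast
      field_simp
      ring
  rw [← hasSum_nat_add_iff' 1]
  simpa using hshift

theorem hasSum_withLinearTail_mul_pow_div_factorial (L : ℕ → ℝ) (m : ℕ) (x z : ℝ) :
    HasSum (fun n => withLinearTail L m x n * z ^ n / n !)
      ((x * z - 1) * exp z + ∑ i ∈ range (m + 1), (L i - x * i + 1) * z ^ i / i !) := by
  have haffine : HasSum (fun n : ℕ => (x * n - 1) * z ^ n / n !) ((x * z - 1) * exp z) := by
    rw [sub_one_mul, mul_assoc]
    exact (((hasSum_natCast_mul_pow_div_factorial z).mul_left x).sub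
      (hasSum_pow_div_factorial z)).congr_fun fun n => by ring
  have hhead : HasSum (fun n => if n ≤ m then (L n - x * n + 1) * z ^ n / n ! else 0)
      (∑ i ∈ range (m + 1), (L i - x * i + 1) * z ^ i / i !) := by
    have hfinite : HasSum (fun n => if n ≤ m then (L n - x * n + 1) * z ^ n / n ! else 0)
        (∑ i ∈ range (m + 1), if i ≤ m then (L i - x * i + 1) * z ^ i / i ! else 0) :=
      hasSum_sum_of_ne_finset_zero fun n hn => if_neg (by simpa [Nat.lt_succ_iff] using hn)
    rwa [sum_congr rfl fun i hi => if_pos (Nat.lt_succ_iff.mp (mem_range.mp hi))] at hfinite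
  refine (haffine.add hhead).congr_fun fun n => ?_
  unfold withLinearTail
  split_ifs <;> ring

theorem poissonTransform_withLinearTail (L : ℕ → ℝ) (m : ℕ) (x z : ℝ) :
    poissonTransform (withLinearTail L m x) z = x * z - 1 +
      ∑ i ∈ range (m + 1), (L i - x * i + 1) * (z ^ i / i !) * exp (-z) := by
  rw [poissonTransform, (hasSum_withLinearTail_mul_pow_div_factorial L m x z).tsum_eq, mul_add,
    mul_sum]
  congr 1
  · rw [mul_comm, mul_assoc, ← exp_add, add_neg_cancel, exp_zero, mul_one]
  · exact sum_congr rfl fun i _ => by ring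

theorem poissonTransform_mono {a b : ℕ → ℝ} {z : ℝ} (hz : 0 ≤ z) (hab : a ≤ b)
    (ha : Summable fun n => a n * z ^ n / n !) (hb : Summable fun n => b n * z ^ n / n !) :
    poissonTransform a z ≤ poissonTransform b z := by
  refine mul_le_mul_of_nonneg_left (ha.tsum_le_tsum (fun n => ?_) hb) (exp_pos _).le
  gcongr
  exact hab n

theorem withLinearTail_le {L : ℕ → ℝ} {m : ℕ} {x : ℝ} (h : ∀ n, m < n → x * n - 1 ≤ L n) :
    withLinearTail L m x ≤ L := fun n => by
  unfold withLinearTail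
  split_ifs with hn
  exacts [le_rfl, h n (not_le.mp hn)]

theorem le_withLinearTail {L : ℕ → ℝ} {m : ℕ} {x : ℝ} (h : ∀ n, m < n → L n ≤ x * n - 1) :
    L ≤ withLinearTail L m x := fun n => by
  unfold withLinearTail
  split_ifs with hn
  exacts [le_rfl, h n (not_le.mp hn)]

theorem poisson_cri_length_bounds_general
    (L : ℕ → ℝ)
    (f : ℝ → ℕ → ℝ → ℝ)
    (hf : ∀ x k z, f x k z = x * z - 1 +
        ∑ i ∈ Finset.range (k + 1),
          (L i - x * (i : ℝ) + 1) * (z ^ i / (i.factorial : ℝ)) * Real.exp (-z))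
    (m : ℕ)
    (α β : ℝ)
    (hαβ : ∀ n : ℕ, m < n → α * (n : ℝ) - 1 ≤ L n ∧ L n ≤ β * (n : ℝ) - 1)
    (hsum : ∀ z : ℝ, 0 ≤ z → Summable (fun n : ℕ => L n * z ^ n / (n.factorial : ℝ)))
    (Λ : ℝ → ℝ)
    (hΛ : ∀ z : ℝ, Λ z = Real.exp (-z) * ∑' n : ℕ, L n * z ^ n / (n.factorial : ℝ)) :
    ∀ z : ℝ, 0 ≤ z → f α m z ≤ Λ z ∧ Λ z ≤ f β m z := by
  intro z hz
  have hΛz : Λ z = poissonTransform L z := hΛ z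
  have hfx : ∀ x, f x m z = poissonTransform (withLinearTail L m x) z := fun x => by
    rw [hf, poissonTransform_withLinearTail]
  have htail_summable : ∀ x, Summable fun n => withLinearTail L m x n * z ^ n / n ! :=
    fun x => (hasSum_withLinearTail_mul_pow_div_factorial L m x z).summable
  rw [hΛz, hfx, hfx]
  exact ⟨poissonTransform_mono hz (withLinearTail_le fun n hn => (hαβ n hn).1)
      (htail_summable α) (hsum z hz),
    poissonTransform_mono hz (le_withLinearTail fun n hn => (hαβ n hn).2)
      (hsum z hz) (htail_summable β)⟩

theorem poisson_cri_length_bounds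
    (K : ℕ) (hK : 1 ≤ K)
    (L : ℕ → ℝ)
    (hL1 : ∀ n, n ≤ K → L n = 1)
    (hL2 : ∀ n, K < n → L n = 1 + ∑ i ∈ Finset.range (n + 1),
        (n.choose i : ℝ) * (1 / 2 : ℝ) ^ i * (1 - (1 / 2 : ℝ)) ^ (n - i) * (L i + L (n - i)))
    (f : ℝ → ℕ → ℝ → ℝ)
    (hf : ∀ x k z, f x k z = x * z - 1 +
        ∑ i ∈ Finset.range (k + 1),
          (L i - x * (i : ℝ) + 1) * (z ^ i / (i.factorial : ℝ)) * Real.exp (-z))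
    (m : ℕ) (hm : K ≤ m)
    (α β : ℝ)
    (hαβ : ∀ n : ℕ, m < n → α * (n : ℝ) - 1 ≤ L n ∧ L n ≤ β * (n : ℝ) - 1)
    (hsum : ∀ z : ℝ, 0 ≤ z → Summable (fun n : ℕ => L n * z ^ n / (n.factorial : ℝ)))
    (Λ : ℝ → ℝ)
    (hΛ : ∀ z : ℝ, Λ z = Real.exp (-z) * ∑' n : ℕ, L n * z ^ n / (n.factorial : ℝ)) :
    ∀ z : ℝ, 0 ≤ z → f α m z ≤ Λ z ∧ Λ z ≤ f β m z :=
  poisson_cri_length_bounds_general L f hf m α β hαβ hsum Λ hΛ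
end
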